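/- arXiv:2409.20105 — 7 statements merged into one kernel-verified Lean document; each statement's English description precedes it below -/
import Mathlib

section
/- Let A be an m×m real symmetric matrix and B an n×n real symmetric matrix with orthonormal eigenbases: eigenpairs (α_i, u_i) for i=1,…,m and (β_i, v_i) for i=1,…,n, where {u_i} and {v_i} are orthonormal. For any real ρ, the (m+n)×(m+n) block matrix C = [[A, ρ u_1 v_1^T],[ρ v_1 u_1^T, B]] has eigenvalues α_2,…,α_m, β_2,…,β_n, together with the two eigenvalues of the 2×2 matrix [[α_1, ρ],[ρ, β_1]]. -/
open Matrix Polynomial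

private lemma my_charpoly_conj {N R : Type*} [Fintype N] [DecidableEq N] [CommRing R]
    (P Q M : Matrix N N R) (h : P * Q = 1) : (P * M * Q).charpoly = M.charpoly := by
  have h' : (P.map (C : R →+* R[X])) * (Q.map C) = 1 := by
    rw [← Matrix.map_mul, h, Matrix.map_one _ (map_zero C) (map_one C)]
  have key : charmatrix (P * M * Q) = (P.map C) * charmatrix M * (Q.map C) := by
    unfold charmatrix
    rw [mul_sub, sub_mul]
    congr 1
    · rw [mul_assoc, ((scalar_commute (X : R[X]) (fun r' => Commute.all _ _) (Q.map C)).symm ▸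
        rfl : (scalar N (X : R[X])) * (Q.map C) = (Q.map C) * scalar N (X : R[X]))]
      rw [← mul_assoc, h', one_mul]
    · simp only [RingHom.mapMatrix_apply, Matrix.map_mul]
  rw [charpoly, key, det_mul, det_mul, charpoly]
  rw [mul_comm (det _), mul_assoc, ← det_mul, h', det_one, mul_one]

private lemma my_charpoly_diagonal {N R : Type*} [Fintype N] [DecidableEq N] [CommRing R]
    (d : N → R) : (diagonal d).charpoly = ∏ x, (X - C (d x)) := by
  have : charmatrix (diagonal d) = diagonal (fun x => X - C (d x)) := by
    ext i j
    by_cases h : i = j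
    · subst h; simp
    · simp [charmatrix_apply, diagonal_apply_ne _ h, h]
  rw [charpoly, this, det_diagonal]

private lemma my_orth {k : ℕ} (u : Fin k → (Fin k → ℝ))
    (hu : ∀ i i', u i ⬝ᵥ u i' = if i = i' then (1 : ℝ) else 0) :
    (Matrix.of fun i j => u j i)ᵀ * (Matrix.of fun i j => u j i) = 1 := by
  ext i j
  simpa [Matrix.mul_apply, dotProduct, Matrix.one_apply] using hu i j

private lemma my_diag {k : ℕ} (A : Matrix (Fin k) (Fin k) ℝ) (α : Fin k → ℝ)
    (u : Fin k → (Fin k → ℝ)) (hAu : ∀ i, A *ᵥ u i = α i • u i)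
    (hu : ∀ i i', u i ⬝ᵥ u i' = if i = i' then (1 : ℝ) else 0) :
    (Matrix.of fun i j => u j i)ᵀ * A * (Matrix.of fun i j => u j i) = diagonal α := by
  ext i i'
  rw [Matrix.mul_assoc]
  have hcol : ∀ r, (A * (Matrix.of fun i j => u j i)) r i' = α i' * u i' r := by
    intro r
    have := congrFun (hAu i') r
    simpa [Matrix.mulVec, dotProduct, Matrix.mul_apply] using this
  rw [Matrix.mul_apply]
  simp only [transpose_apply, Matrix.of_apply, hcol]
  have : ∑ r, u i r * (α i' * u i' r) = α i' * (u i ⬝ᵥ u i') := by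
    rw [dotProduct, Finset.mul_sum]; congr 1; ext r; ring
  rw [this, hu i i', diagonal]
  by_cases h : i = i' <;> simp [h]

private lemma my_cross {k l : ℕ} (u : Fin k → (Fin k → ℝ)) (v : Fin l → (Fin l → ℝ))
    (hu : ∀ i i', u i ⬝ᵥ u i' = if i = i' then (1 : ℝ) else 0)
    (hv : ∀ i i', v i ⬝ᵥ v i' = if i = i' then (1 : ℝ) else 0)
    (a : Fin k) (b : Fin l) :
    (Matrix.of fun i j => u j i)ᵀ * vecMulVec (u a) (v b) * (Matrix.of fun i j => v j i)
      = Matrix.of fun i j => if i = a ∧ j = b then (1 : ℝ) else 0 := by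
  ext i j
  rw [Matrix.mul_assoc, Matrix.mul_apply]
  have hcol : ∀ r, (vecMulVec (u a) (v b) * (Matrix.of fun i j => v j i)) r j
      = u a r * (if b = j then (1:ℝ) else 0) := by
    intro r
    rw [Matrix.mul_apply]
    rw [← hv b j, dotProduct, Finset.mul_sum]
    congr 1; ext l'; simp [vecMulVec_apply]; ring
  simp only [transpose_apply, Matrix.of_apply, hcol]
  have : ∑ r, u i r * (u a r * (if b = j then (1:ℝ) else 0))
      = (u i ⬝ᵥ u a) * (if b = j then (1:ℝ) else 0) := by
    rw [dotProduct, Finset.sum_mul]; congr 1; ext r; ring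
  rw [this, hu i a]
  by_cases h1 : i = a <;> by_cases h2 : j = b <;> simp [h1, h2]
  · exact fun h => absurd h.symm h2

private def fEquiv {m n : ℕ} (hm : 0 < m) (hn : 0 < n) :
    (Fin 2 ⊕ ({i : Fin m // i ≠ ⟨0, hm⟩} ⊕ {j : Fin n // j ≠ ⟨0, hn⟩})) ≃ (Fin m ⊕ Fin n) where
  toFun := Sum.elim ![Sum.inl ⟨0, hm⟩, Sum.inr ⟨0, hn⟩]
    (Sum.elim (fun i => Sum.inl i.1) (fun j => Sum.inr j.1))
  invFun x := match x with
    | .inl i => if h : i = ⟨0, hm⟩ then .inl 0 else .inr (.inl ⟨i, h⟩)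
    | .inr j => if h : j = ⟨0, hn⟩ then .inl 1 else .inr (.inr ⟨j, h⟩)
  left_inv := by
    rintro (x | (i | j))
    · fin_cases x <;> simp
    · simp [i.2]
    · simp [j.2]
  right_inv := by
    rintro (i | j)
    · by_cases h : i = ⟨0, hm⟩ <;> simp [h]
    · by_cases h : j = ⟨0, hn⟩ <;> simp [h]

private lemma my_reindex {m n : ℕ} (hm : 0 < m) (hn : 0 < n) (α : Fin m → ℝ) (β : Fin n → ℝ)
    (ρ : ℝ) :
    ((fromBlocks (diagonal α)
        (ρ • Matrix.of fun i j => if i = ⟨0,hm⟩ ∧ j = ⟨0,hn⟩ then (1:ℝ) else 0)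
        (ρ • Matrix.of fun j i => if j = ⟨0,hn⟩ ∧ i = ⟨0,hm⟩ then (1:ℝ) else 0)
        (diagonal β)).submatrix (fEquiv hm hn) (fEquiv hm hn))
      = fromBlocks (!![α ⟨0,hm⟩, ρ; ρ, β ⟨0,hn⟩]) 0 0
          (diagonal (Sum.elim (fun i : {i : Fin m // i ≠ ⟨0,hm⟩} => α i.1)
            (fun j : {j : Fin n // j ≠ ⟨0,hn⟩} => β j.1))) := by
  ext x y
  rcases x with x | (i | j) <;> rcases y with y | (i' | j')
  · fin_cases x <;> fin_cases y <;>
      simp [fEquiv, fromBlocks, diagonal, Fin.ext_iff, hm.ne', hn.ne']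
  · fin_cases x <;> simp [fEquiv, fromBlocks, diagonal, i'.2]
    exact fun h => absurd h.symm i'.2
  · fin_cases x <;> simp [fEquiv, fromBlocks, diagonal, j'.2]
    exact fun h => absurd h.symm j'.2
  · fin_cases y <;> simp [fEquiv, fromBlocks, diagonal, i.2]
  · simp [fEquiv, fromBlocks, diagonal, Subtype.ext_iff]
  · simp [fEquiv, fromBlocks, i.2]
  · fin_cases y <;> simp [fEquiv, fromBlocks, diagonal, j.2]
  · simp [fEquiv, fromBlocks, j.2]
  · simp [fEquiv, fromBlocks, diagonal, Subtype.ext_iff]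

private lemma my_step1 {m n : ℕ} (hm : 0 < m) (hn : 0 < n)
    (A : Matrix (Fin m) (Fin m) ℝ) (B : Matrix (Fin n) (Fin n) ℝ)
    (α : Fin m → ℝ) (u : Fin m → (Fin m → ℝ))
    (β : Fin n → ℝ) (v : Fin n → (Fin n → ℝ))
    (hAu : ∀ i, A *ᵥ u i = α i • u i)
    (hBv : ∀ i, B *ᵥ v i = β i • v i)
    (hu : ∀ i i', u i ⬝ᵥ u i' = if i = i' then (1 : ℝ) else 0)
    (hv : ∀ i i', v i ⬝ᵥ v i' = if i = i' then (1 : ℝ) else 0)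
    (ρ : ℝ) :
    (Matrix.fromBlocks A (ρ • vecMulVec (u ⟨0, hm⟩) (v ⟨0, hn⟩))
        (ρ • vecMulVec (v ⟨0, hn⟩) (u ⟨0, hm⟩)) B).charpoly
      = (fromBlocks (diagonal α)
          (ρ • Matrix.of fun i j => if i = ⟨0,hm⟩ ∧ j = ⟨0,hn⟩ then (1:ℝ) else 0)
          (ρ • Matrix.of fun j i => if j = ⟨0,hn⟩ ∧ i = ⟨0,hm⟩ then (1:ℝ) else 0)
          (diagonal β)).charpoly := by
  have hPQ : (fromBlocks (Matrix.of fun i j => u j i) 0 0 (Matrix.of fun i j => v j i))ᵀ *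
      (fromBlocks (Matrix.of fun i j => u j i) 0 0 (Matrix.of fun i j => v j i)) = 1 := by
    simp only [fromBlocks_transpose, transpose_zero, fromBlocks_multiply, Matrix.zero_mul,
      Matrix.mul_zero, add_zero, zero_add]
    rw [my_orth u hu, my_orth v hv, fromBlocks_one]
  rw [← my_charpoly_conj _ _ _ hPQ]
  congr 1
  simp only [fromBlocks_transpose, transpose_zero, fromBlocks_multiply, Matrix.mul_smul,
    Matrix.smul_mul, smul_zero, Matrix.zero_mul, Matrix.mul_zero, add_zero, zero_add]
  rw [my_diag A α u hAu hu, my_diag B β v hBv hv, my_cross u v hu hv _ _, my_cross v u hv hu _ _]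

/-- Fiedler's lemma. -/
theorem fiedler_lemma {m n : ℕ} (hm : 0 < m) (hn : 0 < n)
    (A : Matrix (Fin m) (Fin m) ℝ) (B : Matrix (Fin n) (Fin n) ℝ)
    (hA : A.IsSymm) (hB : B.IsSymm)
    (α : Fin m → ℝ) (u : Fin m → (Fin m → ℝ))
    (β : Fin n → ℝ) (v : Fin n → (Fin n → ℝ))
    (hAu : ∀ i, A *ᵥ u i = α i • u i)
    (hBv : ∀ i, B *ᵥ v i = β i • v i)
    (hu : ∀ i i', u i ⬝ᵥ u i' = if i = i' then (1 : ℝ) else 0)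
    (hv : ∀ i i', v i ⬝ᵥ v i' = if i = i' then (1 : ℝ) else 0)
    (ρ : ℝ) :
    (Matrix.fromBlocks A (ρ • vecMulVec (u ⟨0, hm⟩) (v ⟨0, hn⟩))
        (ρ • vecMulVec (v ⟨0, hn⟩) (u ⟨0, hm⟩)) B).charpoly.roots
      = (Finset.univ.filter (fun i : Fin m => i ≠ ⟨0, hm⟩)).val.map α
        + (Finset.univ.filter (fun i : Fin n => i ≠ ⟨0, hn⟩)).val.map β
        + (!![α ⟨0, hm⟩, ρ; ρ, β ⟨0, hn⟩]).charpoly.roots := by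
  rw [my_step1 hm hn A B α u β v hAu hBv hu hv ρ]
  have hcp : (fromBlocks (diagonal α)
          (ρ • Matrix.of fun i j => if i = ⟨0,hm⟩ ∧ j = ⟨0,hn⟩ then (1:ℝ) else 0)
          (ρ • Matrix.of fun j i => if j = ⟨0,hn⟩ ∧ i = ⟨0,hm⟩ then (1:ℝ) else 0)
          (diagonal β)).charpoly
      = (!![α ⟨0, hm⟩, ρ; ρ, β ⟨0, hn⟩]).charpoly *
        ((∏ i : {i : Fin m // i ≠ ⟨0, hm⟩}, (X - C (α i.1))) *
         (∏ j : {j : Fin n // j ≠ ⟨0, hn⟩}, (X - C (β j.1)))) := by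
    rw [← charpoly_reindex (fEquiv hm hn).symm, reindex_apply, Equiv.symm_symm,
      my_reindex hm hn α β ρ, charpoly_fromBlocks_zero₂₁, my_charpoly_diagonal,
      Fintype.prod_sum_type]
    simp only [Sum.elim_inl, Sum.elim_inr]
  rw [hcp]
  have h2 : (∏ i : {i : Fin m // i ≠ ⟨0, hm⟩}, (X - C (α i.1)))
      = (((Finset.univ.filter (fun i : Fin m => i ≠ ⟨0, hm⟩)).val.map α).map
          (fun r => X - C r)).prod := by
    rw [← Finset.prod_subtype (Finset.univ.filter (fun i : Fin m => i ≠ ⟨0, hm⟩)) (by simp)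
      (fun a => X - C (α a)), Finset.prod_eq_multiset_prod, Multiset.map_map]
    rfl
  have h3 : (∏ j : {j : Fin n // j ≠ ⟨0, hn⟩}, (X - C (β j.1)))
      = (((Finset.univ.filter (fun j : Fin n => j ≠ ⟨0, hn⟩)).val.map β).map
          (fun r => X - C r)).prod := by
    rw [← Finset.prod_subtype (Finset.univ.filter (fun j : Fin n => j ≠ ⟨0, hn⟩)) (by simp)
      (fun a => X - C (β a)), Finset.prod_eq_multiset_prod, Multiset.map_map]
    rfl
  have hq : (!![α ⟨0, hm⟩, ρ; ρ, β ⟨0, hn⟩]).charpoly ≠ 0 := (charpoly_monic _).ne_zero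
  have hne : ∀ (s : Multiset ℝ), (s.map (fun r => X - C r)).prod ≠ (0 : ℝ[X]) := by
    intro s
    exact (Multiset.prod_ne_zero (by simp [X_sub_C_ne_zero]))
  rw [h2, h3, roots_mul (mul_ne_zero hq (mul_ne_zero (hne _) (hne _))),
    roots_mul (mul_ne_zero (hne _) (hne _)), roots_multiset_prod_X_sub_C,
    roots_multiset_prod_X_sub_C]
  abel
end

section
/- For j = 1,…,n let A_j be a real symmetric m_j×m_j matrix with eigenpairs (λ_{i,j}, u_{i,j}), i = 1,…,m_j, where for each j the vectors u_{1,j},…,u_{m_j,j} form an orthonormal basis. Fix k ≤ min{m_1,…,m_n} and set U_j = (u_{1,j}|…|u_{k,j}) (an m_j×k matrix). Let ρ_{i,j} = ρ_{j,i} be real numbers for 1 ≤ i ≠ j ≤ n. Then the block matrix C with diagonal blocks A_j and off-diagonal (i,j)-blocks ρ_{i,j} U_i U_j^T has as its eigenvalues: λ_{i,j} for all j = 1,…,n and i = k+1,…,m_j, together with, for each t = 1,…,k, the n eigenvalues of the n×n matrix C_t whose diagonal entries are λ_{t,1},…,λ_{t,n} and whose (i,j) off-diagonal entries are ρ_{i,j}.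 -/
open Matrix Polynomial

variable {R : Type*} [CommRing R]

lemma aux_charpoly_conj {ι : Type*} [Fintype ι] [DecidableEq ι]
    (P D Q : Matrix ι ι R) (h1 : P * Q = 1) :
    (P * D * Q).charpoly = D.charpoly := by
  have hPQ : (P.map (C : R →+* R[X])) * (Q.map (C : R →+* R[X])) = 1 := by
    rw [← Matrix.map_mul, h1]
    exact Matrix.map_one _ (map_zero _) (map_one _)
  have hcm : charmatrix (P * D * Q) = P.map C * charmatrix D * Q.map C := by
    rw [charmatrix, charmatrix]
    simp only [RingHom.mapMatrix_apply]
    rw [Matrix.map_mul, Matrix.map_mul, mul_sub, sub_mul]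
    congr 1
    rw [← (scalar_commute (X : R[X]) (fun r' => Commute.all _ _) (P.map C)).eq,
      mul_assoc, hPQ, mul_one]
  rw [Matrix.charpoly, hcm, Matrix.det_mul, Matrix.det_mul, Matrix.charpoly,
    mul_comm (P.map (C : R →+* R[X])).det, mul_assoc, ← Matrix.det_mul, hPQ,
    Matrix.det_one, mul_one]

lemma aux_charpoly_blockDiagonal {o p : Type*} [Fintype o] [DecidableEq o] [Fintype p]
    [DecidableEq p] (M : o → Matrix p p R) :
    (blockDiagonal M).charpoly = ∏ t, (M t).charpoly := by
  have h : charmatrix (blockDiagonal M) = blockDiagonal fun t => charmatrix (M t) := by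
    ext ⟨i, t⟩ ⟨j, t'⟩
    by_cases h : t = t'
    · subst h
      by_cases hij : i = j
      · subst hij; simp [charmatrix_apply, blockDiagonal_apply]
      · simp [charmatrix_apply, blockDiagonal_apply, diagonal_apply, hij, Prod.ext_iff]
    · simp [charmatrix_apply, blockDiagonal_apply, diagonal_apply, h, Prod.ext_iff]
  rw [Matrix.charpoly, h, det_blockDiagonal]
  rfl

lemma aux_charpoly_diagonal {ι : Type*} [Fintype ι] [DecidableEq ι] (d : ι → R) :
    (diagonal d).charpoly = ∏ i, (X - C (d i)) := by
  have h : charmatrix (diagonal d) = diagonal fun i => X - C (d i) := by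
    ext i j
    by_cases hij : i = j
    · subst hij; simp
    · simp [charmatrix_apply, diagonal_apply, hij]
  rw [Matrix.charpoly, h, det_diagonal]

def fiedlerEquiv {n : ℕ} (m : Fin n → ℕ) (k : ℕ) (hk : ∀ j, k ≤ m j) :
    (Σ j, Fin (m j)) ≃ (Fin n × Fin k) ⊕ (Σ j, {i : Fin (m j) // k ≤ (i : ℕ)}) where
  toFun x := if h : (x.2 : ℕ) < k then Sum.inl (x.1, ⟨x.2, h⟩)
    else Sum.inr ⟨x.1, x.2, le_of_not_gt h⟩
  invFun y := y.elim (fun p => ⟨p.1, ⟨p.2, lt_of_lt_of_le p.2.2 (hk p.1)⟩⟩)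
    (fun s => ⟨s.1, s.2.1⟩)
  left_inv := by
    rintro ⟨j, i⟩
    by_cases h : (i : ℕ) < k <;> simp [h]
  right_inv := by
    rintro (⟨j, t⟩ | ⟨j, i⟩)
    · simp [t.2]
    · simp [Nat.not_lt.2 i.2]

lemma fiedlerEquiv_symm_inl {n : ℕ} (m : Fin n → ℕ) (k : ℕ) (hk : ∀ j, k ≤ m j)
    (j : Fin n) (t : Fin k) :
    (fiedlerEquiv m k hk).symm (Sum.inl (j, t))
      = ⟨j, ⟨(t : ℕ), lt_of_lt_of_le t.2 (hk j)⟩⟩ := rfl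

lemma fiedlerEquiv_symm_inr {n : ℕ} (m : Fin n → ℕ) (k : ℕ) (hk : ∀ j, k ≤ m j)
    (s : Σ j, {i : Fin (m j) // k ≤ (i : ℕ)}) :
    (fiedlerEquiv m k hk).symm (Sum.inr s) = ⟨s.1, s.2.1⟩ := rfl

/-- Generalization of Fiedler's lemma (Theorem 2.1 of the paper). -/
theorem generalized_fiedler {n : ℕ} (m : Fin n → ℕ)
    (A : ∀ j, Matrix (Fin (m j)) (Fin (m j)) ℝ)
    (hA : ∀ j, (A j).IsSymm)
    (lam : ∀ j, Fin (m j) → ℝ) (u : ∀ j, Fin (m j) → (Fin (m j) → ℝ))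
    (heig : ∀ j i, A j *ᵥ u j i = lam j i • u j i)
    (horth : ∀ j i i', u j i ⬝ᵥ u j i' = if i = i' then (1 : ℝ) else 0)
    (k : ℕ) (hk : ∀ j, k ≤ m j)
    (ρ : Fin n → Fin n → ℝ) (hρ : ∀ i j, ρ i j = ρ j i)
    (C : Matrix (Σ j, Fin (m j)) (Σ j, Fin (m j)) ℝ)
    (hC : ∀ x y : Σ j, Fin (m j),
      C x y = if h : x.1 = y.1 then A x.1 x.2 (Fin.cast (congrArg m h).symm y.2)
        else ρ x.1 y.1 * ∑ t : Fin k,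
          u x.1 ⟨t, lt_of_lt_of_le t.2 (hk x.1)⟩ x.2 *
          u y.1 ⟨t, lt_of_lt_of_le t.2 (hk y.1)⟩ y.2) :
    C.charpoly.roots
      = (∑ j : Fin n,
          (Finset.univ.filter (fun i : Fin (m j) => k ≤ (i : ℕ))).val.map (lam j))
        + ∑ t : Fin k,
          (Matrix.of (fun i j : Fin n =>
            if i = j then lam i ⟨t, lt_of_lt_of_le t.2 (hk i)⟩ else ρ i j)).charpoly.roots := by
  classical
  set U : ∀ j, Matrix (Fin (m j)) (Fin (m j)) ℝ := fun j => Matrix.of fun r c => u j c r with hU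
  set P : Matrix (Σ j, Fin (m j)) (Σ j, Fin (m j)) ℝ := blockDiagonal' U with hP
  set D : Matrix (Σ j, Fin (m j)) (Σ j, Fin (m j)) ℝ := Matrix.of fun x y =>
    if (x.2 : ℕ) = (y.2 : ℕ) then
      (if x.1 = y.1 then lam x.1 x.2 else if (x.2 : ℕ) < k then ρ x.1 y.1 else 0)
    else 0 with hD
  have hPtP : Pᵀ * P = 1 := by
    rw [hP, blockDiagonal'_transpose, ← blockDiagonal'_mul]
    have h : (fun j => (U j)ᵀ * U j) = (1 : ∀ j, Matrix (Fin (m j)) (Fin (m j)) ℝ) := by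
      funext j
      ext i i'
      have h0 : ((U j)ᵀ * U j) i i' = u j i ⬝ᵥ u j i' := by
        simp [Matrix.mul_apply, dotProduct, hU]
      rw [h0, horth, Pi.one_apply, Matrix.one_apply]
    rw [h, blockDiagonal'_one]
  have hPPt : P * Pᵀ = 1 := mul_eq_one_comm.mp hPtP
  have hCP : C * P = P * D := by
    rw [hP]
    ext ⟨j, i⟩ ⟨j', i'⟩
    have hL : (C * blockDiagonal' U) ⟨j, i⟩ ⟨j', i'⟩
        = ∑ r : Fin (m j'), C ⟨j, i⟩ ⟨j', r⟩ * u j' i' r := by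
      rw [Matrix.mul_apply, ← Finset.univ_sigma_univ, Finset.sum_sigma]
      rw [Fintype.sum_eq_single j' (fun b hb => Finset.sum_eq_zero fun r _ => by
        rw [blockDiagonal'_apply_ne U r i' hb, mul_zero])]
      exact Finset.sum_congr rfl fun r _ => by rw [hU, blockDiagonal'_apply_eq]; rfl
    have hR : (blockDiagonal' U * D) ⟨j, i⟩ ⟨j', i'⟩
        = ∑ r : Fin (m j), u j r i * D ⟨j, r⟩ ⟨j', i'⟩ := by
      rw [Matrix.mul_apply, ← Finset.univ_sigma_univ, Finset.sum_sigma]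
      rw [Fintype.sum_eq_single j (fun b hb => Finset.sum_eq_zero fun r _ => by
        rw [blockDiagonal'_apply_ne U i r (Ne.symm hb), zero_mul])]
      exact Finset.sum_congr rfl fun r _ => by rw [hU, blockDiagonal'_apply_eq]; rfl
    rw [hL, hR]
    by_cases hjj : j = j'
    · subst hjj
      have hCr : ∀ r : Fin (m j), C ⟨j, i⟩ ⟨j, r⟩ = A j i r := fun r => by
        rw [hC]; simp
      have hDr : ∀ r : Fin (m j), u j r i * D ⟨j, r⟩ ⟨j, i'⟩
          = if r = i' then u j r i * lam j r else 0 := by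
        intro r
        rw [hD]
        simp only [Matrix.of_apply, if_pos rfl, Fin.val_eq_val]
        by_cases h : r = i' <;> simp [h]
      simp_rw [hCr, hDr]
      rw [Finset.sum_ite_eq' Finset.univ i' (fun r => u j r i * lam j r)]
      have h2 : ∑ r, A j i r * u j i' r = (A j *ᵥ u j i') i := rfl
      rw [h2, heig]
      simp [mul_comm]
    · have hCr : ∀ r : Fin (m j'), C ⟨j, i⟩ ⟨j', r⟩
          = ρ j j' * ∑ t : Fin k, u j ⟨t, lt_of_lt_of_le t.2 (hk j)⟩ i *
              u j' ⟨t, lt_of_lt_of_le t.2 (hk j')⟩ r := fun r => by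
        rw [hC]; simp [hjj]
      simp_rw [hCr]
      have hLHS : ∑ r : Fin (m j'), (ρ j j' * ∑ t : Fin k,
            u j ⟨t, lt_of_lt_of_le t.2 (hk j)⟩ i * u j' ⟨t, lt_of_lt_of_le t.2 (hk j')⟩ r)
              * u j' i' r
          = ρ j j' * ∑ t : Fin k, u j ⟨t, lt_of_lt_of_le t.2 (hk j)⟩ i *
              ∑ r : Fin (m j'), u j' ⟨t, lt_of_lt_of_le t.2 (hk j')⟩ r * u j' i' r := by
        simp_rw [mul_assoc, ← Finset.mul_sum]
        congr 1
        simp_rw [Finset.sum_mul]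
        rw [Finset.sum_comm]
        simp_rw [mul_assoc, ← Finset.mul_sum]
      rw [hLHS]
      have hortho' : ∀ t : Fin k,
          (∑ r : Fin (m j'), u j' ⟨t, lt_of_lt_of_le t.2 (hk j')⟩ r * u j' i' r)
          = if (⟨t, lt_of_lt_of_le t.2 (hk j')⟩ : Fin (m j')) = i' then (1:ℝ) else 0 := by
        intro t
        rw [← horth j' ⟨t, lt_of_lt_of_le t.2 (hk j')⟩ i']
        rfl
      simp_rw [hortho']
      have hDr : ∀ r : Fin (m j), u j r i * D ⟨j, r⟩ ⟨j', i'⟩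
          = if (r : ℕ) = (i' : ℕ) ∧ (r : ℕ) < k then u j r i * ρ j j' else 0 := by
        intro r
        rw [hD]
        simp only [Matrix.of_apply, if_neg hjj]
        by_cases h1 : (r : ℕ) = (i' : ℕ) <;> by_cases h2 : (r : ℕ) < k <;>
          simp [h1, h2]
      simp_rw [hDr]
      by_cases h' : (i' : ℕ) < k
      · rw [Fintype.sum_eq_single (⟨(i' : ℕ), h'⟩ : Fin k) (fun t ht => by
          rw [if_neg, mul_zero]
          intro heq
          exact ht (Fin.ext (by simpa using congrArg Fin.val heq)))]
        rw [Fintype.sum_eq_single (⟨(i' : ℕ), lt_of_lt_of_le h' (hk j)⟩ : Fin (m j))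
          (fun r hr => by
            rw [if_neg]
            rintro ⟨h1, -⟩
            exact hr (Fin.ext h1))]
        rw [if_pos (Fin.ext rfl), if_pos ⟨rfl, h'⟩, mul_one, mul_comm]
      · rw [Finset.sum_eq_zero fun t _ => by
          rw [if_neg, mul_zero]
          intro heq
          exact h' (by simpa using (congrArg Fin.val heq) ▸ t.2), mul_zero]
        rw [Finset.sum_eq_zero fun r _ => by
          rw [if_neg]
          rintro ⟨h1, h2⟩
          exact h' (h1 ▸ h2)]
  have hCD : C = P * D * Pᵀ := by
    calc C = C * (P * Pᵀ) := by rw [hPPt, mul_one]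
    _ = (C * P) * Pᵀ := by rw [mul_assoc]
    _ = P * D * Pᵀ := by rw [hCP]
  have hchar : C.charpoly = D.charpoly := by
    rw [hCD]; exact aux_charpoly_conj P D Pᵀ hPPt
  set Ct : Fin k → Matrix (Fin n) (Fin n) ℝ := fun t => Matrix.of fun i j =>
    if i = j then lam i ⟨t, lt_of_lt_of_le t.2 (hk i)⟩ else ρ i j with hCt
  set dbig : (Σ j, {i : Fin (m j) // k ≤ (i : ℕ)}) → ℝ := fun s => lam s.1 s.2.1 with hdbig
  set e := fiedlerEquiv m k hk with he
  have hre : (reindex e e) D = fromBlocks (blockDiagonal Ct) 0 0 (diagonal dbig) := by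
    ext x y
    rw [reindex_apply, submatrix_apply]
    rcases x with ⟨j, t⟩ | ⟨j, i⟩ <;> rcases y with ⟨j', t'⟩ | ⟨j', i'⟩
    · rw [he, fiedlerEquiv_symm_inl, fiedlerEquiv_symm_inl, fromBlocks_apply₁₁,
        hD, blockDiagonal_apply, hCt]
      simp only [Matrix.of_apply]
      by_cases h : t = t'
      · subst h
        simp only [if_pos rfl]
        by_cases hjj : j = j'
        · subst hjj; simp
        · simp [hjj, t.2]
      · rw [if_neg (fun hc => h (Fin.ext hc)), if_neg h]
    · rw [he, fiedlerEquiv_symm_inl, fiedlerEquiv_symm_inr, fromBlocks_apply₁₂, hD]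
      simp only [Matrix.of_apply, Matrix.zero_apply]
      rw [if_neg]
      have h1 : (t : ℕ) < k := t.2
      have h2 : k ≤ (i'.1 : ℕ) := i'.2
      exact fun hc => absurd (hc ▸ h1) (Nat.not_lt.2 h2)
    · rw [he, fiedlerEquiv_symm_inr, fiedlerEquiv_symm_inl, fromBlocks_apply₂₁, hD]
      simp only [Matrix.of_apply, Matrix.zero_apply]
      rw [if_neg]
      have h1 : (t' : ℕ) < k := t'.2
      have h2 : k ≤ (i.1 : ℕ) := i.2
      exact fun hc => absurd (hc ▸ h1) (Nat.not_lt.2 h2)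
    · rw [he, fiedlerEquiv_symm_inr, fiedlerEquiv_symm_inr, fromBlocks_apply₂₂, hD, hdbig]
      simp only [Matrix.of_apply]
      by_cases hjj : j = j'
      · subst hjj
        by_cases hii : i = i'
        · subst hii; simp
        · rw [diagonal_apply_ne _ (fun hc => hii (by simpa using hc)),
            if_neg (fun hc => hii (Subtype.ext (Fin.ext hc)))]
      · rw [diagonal_apply_ne _ (fun hc => hjj (congrArg Sigma.fst hc))]
        have hnk : ¬ ((i.1 : ℕ) < k) := Nat.not_lt.2 i.2
        simp [hjj, hnk]
  have hDchar : D.charpoly = (∏ t, (Ct t).charpoly) * ∏ s, (X - Polynomial.C (dbig s)) := by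
    rw [← Matrix.charpoly_reindex e D, hre, Matrix.charpoly_fromBlocks_zero₁₂,
      aux_charpoly_blockDiagonal, aux_charpoly_diagonal]
  have hmonic1 : (∏ t, (Ct t).charpoly).Monic :=
    Polynomial.monic_prod_of_monic _ _ fun t _ => Matrix.charpoly_monic _
  have hmonic2 : (∏ s, (X - Polynomial.C (dbig s))).Monic :=
    Polynomial.monic_prod_of_monic _ _ fun s _ => Polynomial.monic_X_sub_C _
  rw [hchar, hDchar, Polynomial.roots_mul (mul_ne_zero hmonic1.ne_zero hmonic2.ne_zero)]
  have h1 : (∏ t, (Ct t).charpoly).roots = ∑ t, (Ct t).charpoly.roots := by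
    rw [Polynomial.roots_prod _ _ hmonic1.ne_zero]
    rfl
  have h2 : (∏ s, (X - Polynomial.C (dbig s))).roots = Finset.univ.val.map dbig := by
    have h0 : ∏ s, (X - Polynomial.C (dbig s))
        = ((Finset.univ.val.map dbig).map fun a => X - Polynomial.C a).prod := by
      rw [Multiset.map_map]; rfl
    rw [h0, Polynomial.roots_multiset_prod_X_sub_C]
  have h3 : (Finset.univ.val.map dbig) = ∑ j : Fin n,
      (Finset.univ.filter (fun i : Fin (m j) => k ≤ (i : ℕ))).val.map (lam j) := by
    have h4 : (Finset.univ : Finset (Σ j, {i : Fin (m j) // k ≤ (i : ℕ)})).val.map dbig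
        = ∑ j : Fin n, (Finset.univ.val.map
            (fun i : {i : Fin (m j) // k ≤ (i : ℕ)} => lam j i.1)) := by
      rw [← Finset.univ_sigma_univ]
      show ((Finset.univ.val.bind fun j =>
        Finset.univ.val.map (Sigma.mk j)).map dbig) = _
      rw [Multiset.map_bind]
      simp only [Multiset.map_map, Function.comp, hdbig]
      rfl
    rw [h4]
    congr 1
    funext j
    rw [← Finset.univ_val_map_subtype_val (fun i : Fin (m j) => k ≤ (i : ℕ)),
      Multiset.map_map]
    rfl
  rw [h1, h2, h3, add_comm]
end

section
/- With the hypotheses of the generalized Fiedler lemma, for each s = 1,…,n and t = 1,…,k, if (ξ_{s,t}, ŵ) is an eigenpair of the n×n matrix C_t (with ŵ = (w_1,…,w_n)^T), then the vector of dimension m_1+…+m_n whose j-th block is w_j u_{t,j} is an eigenvector of the block matrix C with eigenvalue ξ_{s,t}. -/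
open Matrix Polynomial

/-- In the generalized Fiedler lemma setting, eigenpairs of `C_t` lift to eigenpairs of `C`. -/
theorem generalized_fiedler_eigvec_lift {n : ℕ} (m : Fin n → ℕ)
    (A : ∀ j, Matrix (Fin (m j)) (Fin (m j)) ℝ)
    (hA : ∀ j, (A j).IsSymm)
    (lam : ∀ j, Fin (m j) → ℝ) (u : ∀ j, Fin (m j) → (Fin (m j) → ℝ))
    (heig : ∀ j i, A j *ᵥ u j i = lam j i • u j i)
    (horth : ∀ j i i', u j i ⬝ᵥ u j i' = if i = i' then (1 : ℝ) else 0)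
    (k : ℕ) (hk : ∀ j, k ≤ m j)
    (ρ : Fin n → Fin n → ℝ) (hρ : ∀ i j, ρ i j = ρ j i)
    (C : Matrix (Σ j, Fin (m j)) (Σ j, Fin (m j)) ℝ)
    (hC : ∀ x y : Σ j, Fin (m j),
      C x y = if h : x.1 = y.1 then A x.1 x.2 (Fin.cast (congrArg m h).symm y.2)
        else ρ x.1 y.1 * ∑ t : Fin k,
          u x.1 ⟨t, lt_of_lt_of_le t.2 (hk x.1)⟩ x.2 *
          u y.1 ⟨t, lt_of_lt_of_le t.2 (hk y.1)⟩ y.2)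
    (t : Fin k) (ξ : ℝ) (w : Fin n → ℝ)
    (hw : (Matrix.of (fun i j : Fin n =>
        if i = j then lam i ⟨t, lt_of_lt_of_le t.2 (hk i)⟩ else ρ i j)) *ᵥ w = ξ • w) :
    C *ᵥ (fun x : Σ j, Fin (m j) => w x.1 * u x.1 ⟨t, lt_of_lt_of_le t.2 (hk x.1)⟩ x.2)
      = ξ • (fun x : Σ j, Fin (m j) => w x.1 * u x.1 ⟨t, lt_of_lt_of_le t.2 (hk x.1)⟩ x.2) := by
  set T : ∀ j, Fin (m j) := fun j => ⟨t, lt_of_lt_of_le t.2 (hk j)⟩ with hT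
  funext x
  obtain ⟨a, p⟩ := x
  have key : ∀ j : Fin n, (∑ i : Fin (m j), C ⟨a, p⟩ ⟨j, i⟩ * (w j * u j (T j) i))
      = (if a = j then lam a (T a) else ρ a j) * w j * u a (T a) p := by
    intro j
    rcases eq_or_ne a j with h | h
    · subst h
      simp only [hC, dif_pos rfl, if_pos rfl]
      have hcast : ∀ i : Fin (m a), (Fin.cast (congrArg m (rfl : a = a)).symm i) = i :=
        fun i => rfl
      simp only [hcast]
      have heq := congrFun (heig a (T a)) p
      simp only [mulVec, dotProduct, Pi.smul_apply, smul_eq_mul] at heq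
      calc ∑ i, A a p i * (w a * u a (T a) i)
          = w a * ∑ i, A a p i * u a (T a) i := by
            rw [Finset.mul_sum]; exact Finset.sum_congr rfl fun i _ => by ring
        _ = w a * (lam a (T a) * u a (T a) p) := by rw [heq]
        _ = lam a (T a) * w a * u a (T a) p := by ring
    · have hdc : ∀ i : Fin (m j), C ⟨a, p⟩ ⟨j, i⟩ = ρ a j * ∑ t' : Fin k,
          u a ⟨t', lt_of_lt_of_le t'.2 (hk a)⟩ p * u j ⟨t', lt_of_lt_of_le t'.2 (hk j)⟩ i := by
        intro i
        rw [hC]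
        exact dif_neg h
      have horth' : ∀ t' : Fin k,
          (∑ i : Fin (m j), u j ⟨t', lt_of_lt_of_le t'.2 (hk j)⟩ i * u j (T j) i)
            = if t' = t then (1 : ℝ) else 0 := by
        intro t'
        have hd := horth j ⟨t', lt_of_lt_of_le t'.2 (hk j)⟩ (T j)
        simp only [dotProduct] at hd
        rw [hd]
        by_cases ht : t' = t
        · simp [ht, hT]
        · rw [if_neg ht, if_neg]
          simp only [hT, Fin.mk.injEq]
          exact fun hc => ht (Fin.ext hc)
      rw [if_neg h]
      calc ∑ i : Fin (m j), C ⟨a, p⟩ ⟨j, i⟩ * (w j * u j (T j) i)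
          = ∑ i : Fin (m j), ∑ t' : Fin k, ρ a j * w j *
              (u a ⟨t', lt_of_lt_of_le t'.2 (hk a)⟩ p *
                (u j ⟨t', lt_of_lt_of_le t'.2 (hk j)⟩ i * u j (T j) i)) := by
            refine Finset.sum_congr rfl fun i _ => ?_
            rw [hdc i, Finset.mul_sum, Finset.sum_mul]
            exact Finset.sum_congr rfl fun t' _ => by ring
        _ = ∑ t' : Fin k, ρ a j * w j * (u a ⟨t', lt_of_lt_of_le t'.2 (hk a)⟩ p *
              ∑ i : Fin (m j), u j ⟨t', lt_of_lt_of_le t'.2 (hk j)⟩ i * u j (T j) i) := by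
            rw [Finset.sum_comm]
            exact Finset.sum_congr rfl fun t' _ => by
              rw [Finset.mul_sum, Finset.mul_sum]
        _ = ρ a j * w j * u a (T a) p := by
            simp only [horth']
            rw [Finset.sum_eq_single t]
            · simp [hT]
            · intro b _ hb; simp [hb]
            · intro hmem; exact absurd (Finset.mem_univ t) hmem
  have hwa := congrFun hw a
  simp only [mulVec, dotProduct, of_apply, Pi.smul_apply, smul_eq_mul] at hwa
  show ∑ y : Σ j, Fin (m j), C ⟨a, p⟩ y * (w y.1 * u y.1 (T y.1) y.2)
      = ξ * (w a * u a (T a) p)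
  rw [← Finset.univ_sigma_univ, Finset.sum_sigma]
  calc ∑ j : Fin n, ∑ i : Fin (m j), C ⟨a, p⟩ ⟨j, i⟩ * (w j * u j (T j) i)
      = ∑ j : Fin n, (if a = j then lam a (T a) else ρ a j) * w j * u a (T a) p :=
        Finset.sum_congr rfl fun j _ => key j
    _ = (∑ j : Fin n, (if a = j then lam a (T a) else ρ a j) * w j) * u a (T a) p := by
        rw [Finset.sum_mul]
    _ = (ξ * w a) * u a (T a) p := by rw [hwa]
    _ = ξ * (w a * u a (T a) p) := by ring
end

section
/- With the hypotheses of the generalized Fiedler lemma, for each j = 1,…,n and each i = k+1,…,m_j, the vector of dimension m_1+…+m_n whose j-th block equals u_{i,j} and all other blocks are zero is an eigenvector of the block matrix C with eigenvalue λ_{i,j}. -/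
open Matrix Polynomial

/-- In the generalized Fiedler lemma setting, for `i > k` the vector supported on the `j`-th
block by `u_{i,j}` is an eigenvector of `C` with eigenvalue `λ_{i,j}`. -/
theorem generalized_fiedler_residual_eigvec {n : ℕ} (m : Fin n → ℕ)
    (A : ∀ j, Matrix (Fin (m j)) (Fin (m j)) ℝ)
    (hA : ∀ j, (A j).IsSymm)
    (lam : ∀ j, Fin (m j) → ℝ) (u : ∀ j, Fin (m j) → (Fin (m j) → ℝ))
    (heig : ∀ j i, A j *ᵥ u j i = lam j i • u j i)
    (horth : ∀ j i i', u j i ⬝ᵥ u j i' = if i = i' then (1 : ℝ) else 0)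
    (k : ℕ) (hk : ∀ j, k ≤ m j)
    (ρ : Fin n → Fin n → ℝ) (hρ : ∀ i j, ρ i j = ρ j i)
    (C : Matrix (Σ j, Fin (m j)) (Σ j, Fin (m j)) ℝ)
    (hC : ∀ x y : Σ j, Fin (m j),
      C x y = if h : x.1 = y.1 then A x.1 x.2 (Fin.cast (congrArg m h).symm y.2)
        else ρ x.1 y.1 * ∑ t : Fin k,
          u x.1 ⟨t, lt_of_lt_of_le t.2 (hk x.1)⟩ x.2 *
          u y.1 ⟨t, lt_of_lt_of_le t.2 (hk y.1)⟩ y.2)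
    (j : Fin n) (i : Fin (m j)) (hi : k ≤ (i : ℕ)) :
    C *ᵥ (fun y : Σ j', Fin (m j') =>
        if h : y.1 = j then u j i (Fin.cast (congrArg m h) y.2) else 0)
      = lam j i • (fun y : Σ j', Fin (m j') =>
        if h : y.1 = j then u j i (Fin.cast (congrArg m h) y.2) else 0) := by
  funext x
  obtain ⟨jx, ix⟩ := x
  show (∑ y : Σ j', Fin (m j'), C ⟨jx, ix⟩ y *
      (if h : y.1 = j then u j i (Fin.cast (congrArg m h) y.2) else 0)) = _
  rw [← Finset.univ_sigma_univ, Finset.sum_sigma]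
  rw [Finset.sum_eq_single j]
  · -- inner sum over Fin (m j)
    simp only [dif_pos rfl, Fin.cast_refl, dite_true, id_eq]
    by_cases hx : jx = j
    · subst hx
      have : (∑ t : Fin (m jx), C ⟨jx, ix⟩ ⟨jx, t⟩ * u jx i t)
          = (A jx *ᵥ u jx i) ix := by
        simp only [mulVec, dotProduct, hC, dif_pos rfl, Fin.cast_refl]
        rfl
      rw [this, heig]
      simp [Pi.smul_apply]
    · have hz : ∀ t : Fin (m j), C ⟨jx, ix⟩ ⟨j, t⟩ =
          ρ jx j * ∑ s : Fin k,
            u jx ⟨s, lt_of_lt_of_le s.2 (hk jx)⟩ ix *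
            u j ⟨s, lt_of_lt_of_le s.2 (hk j)⟩ t := by
        intro t
        rw [hC]
        exact dif_neg hx
      simp only [hz]
      have : (∑ t : Fin (m j), (ρ jx j * ∑ s : Fin k,
            u jx ⟨s, lt_of_lt_of_le s.2 (hk jx)⟩ ix *
            u j ⟨s, lt_of_lt_of_le s.2 (hk j)⟩ t) * u j i t) = 0 := by
        simp only [Finset.sum_mul, mul_assoc, ← Finset.mul_sum]
        rw [Finset.sum_comm]
        have h0 : ∀ s : Fin k,
            (∑ t : Fin (m j), u jx ⟨s, lt_of_lt_of_le s.2 (hk jx)⟩ ix *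
              (u j ⟨s, lt_of_lt_of_le s.2 (hk j)⟩ t * u j i t)) = 0 := by
          intro s
          rw [← Finset.mul_sum]
          have := horth j ⟨s, lt_of_lt_of_le s.2 (hk j)⟩ i
          rw [dotProduct] at this
          rw [this, if_neg, mul_zero]
          intro h
          have : (s : ℕ) = (i : ℕ) := congrArg Fin.val h
          omega
        rw [Finset.sum_congr rfl (fun s _ => h0 s), Finset.sum_const_zero, mul_zero]
      rw [this]
      simp [Pi.smul_apply, hx]
  · intro b _ hb
    simp [dif_neg hb]
  · simp
end

section
/- In the setting of the universal adjacency spectrum theorem for the H-product, if (μ, (w_1,…,w_l)^T) is an eigenpair of the l×l matrix C_1 (with diagonal entries αr_j + β(r_j + d_H(j)) + γ + nη and off-diagonal entries ρ_{j,k}α + nη), then the vector of dimension nl whose j-th block is (w_j/√n) j_n is an eigenvector of U(Ĝ) with eigenvalue μ. -/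
open Matrix Polynomial
open scoped Classical

noncomputable section

/-- The `H`-product of graphs `Hs j`, `j ∈ V(H)`: the disjoint union of the `Hs j`
together with edges `(j,i)-(k,i)` whenever `jk ∈ E(H)`. -/
def Hprod {l n : ℕ} (H : SimpleGraph (Fin l)) (Hs : Fin l → SimpleGraph (Fin n)) :
    SimpleGraph (Fin l × Fin n) where
  Adj x y := (x.1 = y.1 ∧ (Hs x.1).Adj x.2 y.2) ∨ (H.Adj x.1 y.1 ∧ x.2 = y.2)
  symm := by
    constructor
    intro x y h
    rcases h with ⟨h1, h2⟩ | ⟨h1, h2⟩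
    · exact Or.inl ⟨h1.symm, h1 ▸ h2.symm⟩
    · exact Or.inr ⟨h1.symm, h2.symm⟩
  loopless := by
    constructor
    intro x h
    rcases h with ⟨_, h2⟩ | ⟨h1, _⟩
    · exact (Hs x.1).irrefl h2
    · exact H.irrefl h1

/-- Real adjacency matrix of a simple graph. -/
def adjM {V : Type*} (G : SimpleGraph V) : Matrix V V ℝ :=
  Matrix.of fun a b => if G.Adj a b then (1 : ℝ) else 0

/-- Diagonal degree matrix of a simple graph. -/
def degM {V : Type*} [Fintype V] (G : SimpleGraph V) : Matrix V V ℝ :=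
  Matrix.diagonal fun v => (G.degree v : ℝ)

/-- Universal adjacency matrix `αA + βD + γI + ηJ`. -/
def uAdj {V : Type*} [Fintype V] [DecidableEq V] (α β γ η : ℝ) (G : SimpleGraph V) :
    Matrix V V ℝ :=
  α • adjM G + β • degM G + γ • (1 : Matrix V V ℝ) + η • Matrix.of (fun _ _ => (1 : ℝ))

end


lemma ind_sum_deg {V : Type*} [Fintype V] (G : SimpleGraph V) (v : V) :
    (∑ u : V, if G.Adj v u then (1:ℝ) else 0) = (G.degree v : ℝ) := by
  classical
  rw [Finset.sum_boole, SimpleGraph.degree, SimpleGraph.neighborFinset_eq_filter]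

lemma Hprod_degree {l n : ℕ} (H : SimpleGraph (Fin l)) (Hs : Fin l → SimpleGraph (Fin n))
    (j : Fin l) (i : Fin n) :
    ((Hprod H Hs).degree (j, i) : ℝ) = ((Hs j).degree i : ℝ) + (H.degree j : ℝ) := by
  classical
  rw [← ind_sum_deg, ← ind_sum_deg, ← ind_sum_deg, Fintype.sum_prod_type]
  have step : ∀ (k : Fin l) (m : Fin n),
      (if (Hprod H Hs).Adj (j, i) (k, m) then (1:ℝ) else 0)
        = (if j = k then (if (Hs j).Adj i m then (1:ℝ) else 0) else 0)
          + (if H.Adj j k then (if i = m then (1:ℝ) else 0) else 0) := by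
    intro k m
    have hiff : (Hprod H Hs).Adj (j, i) (k, m) ↔
        (j = k ∧ (Hs j).Adj i m) ∨ (H.Adj j k ∧ i = m) := Iff.rfl
    simp only [hiff]
    by_cases h1 : j = k
    · subst h1
      simp [H.irrefl]
    · simp only [h1, false_and, false_or, if_false, zero_add]
      by_cases h2 : H.Adj j k <;> by_cases h3 : i = m <;> simp [h2, h3]
  simp only [step, Finset.sum_add_distrib]
  congr 1
  · rw [Finset.sum_comm]
    simp [Finset.sum_ite_eq]
  · have inner : ∀ k : Fin l,
        (∑ m : Fin n, if H.Adj j k then (if i = m then (1:ℝ) else 0) else 0)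
        = if H.Adj j k then (1:ℝ) else 0 := by
      intro k
      by_cases h : H.Adj j k <;> simp [h, Finset.sum_ite_eq]
    simp [inner]

/-- Eigenpairs of the quotient matrix `C_1` lift (via the all-ones blocks) to eigenpairs of
the universal adjacency matrix of the H-product of commuting regular graphs. -/
theorem uAdj_Hprod_C1_eigvec_lift {l n : ℕ} (hn : 0 < n) (H : SimpleGraph (Fin l))
    (Hs : Fin l → SimpleGraph (Fin n)) (r : Fin l → ℕ)
    (hreg : ∀ j, (Hs j).IsRegularOfDegree (r j))
    (hcomm : ∀ j k, adjM (Hs j) * adjM (Hs k) = adjM (Hs k) * adjM (Hs j))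
    (α β γ η : ℝ) (hα : α ≠ 0)
    (μ : ℝ) (w : Fin l → ℝ)
    (hμ : (Matrix.of (fun j k : Fin l =>
        if j = k then α * (r j : ℝ) + β * ((r j : ℝ) + (H.degree j : ℝ)) + γ + (n : ℝ) * η
        else (if H.Adj j k then α else 0) + (n : ℝ) * η)) *ᵥ w = μ • w) :
    uAdj α β γ η (Hprod H Hs) *ᵥ (fun x : Fin l × Fin n => w x.1 / Real.sqrt n)
      = μ • (fun x : Fin l × Fin n => w x.1 / Real.sqrt n) := by

  classical
  funext x
  obtain ⟨j, i⟩ := x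
  have hkey := congrFun hμ j
  simp only [Matrix.mulVec, dotProduct, Matrix.of_apply, Pi.smul_apply,
    smul_eq_mul] at hkey
  have hC1 : ∀ k : Fin l,
      (if j = k then α * (r j : ℝ) + β * ((r j : ℝ) + (H.degree j : ℝ)) + γ + (n : ℝ) * η
        else (if H.Adj j k then α else 0) + (n : ℝ) * η) * w k
      = α * ((if H.Adj j k then (1:ℝ) else 0) * w k) + (n : ℝ) * η * w k
        + (if j = k then (α * (r j : ℝ) + β * ((r j : ℝ) + (H.degree j : ℝ)) + γ) * w k
           else 0) := by
    intro k
    by_cases h : j = k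
    · subst h
      simp [H.irrefl]
      ring
    · by_cases h2 : H.Adj j k <;> simp [h, h2] <;> ring
  rw [Finset.sum_congr rfl (fun k _ => hC1 k), Finset.sum_add_distrib,
    Finset.sum_add_distrib, Finset.sum_ite_eq, if_pos (Finset.mem_univ j),
    ← Finset.mul_sum, ← Finset.mul_sum] at hkey
  set S1 : ℝ := ∑ k : Fin l, (if H.Adj j k then (1:ℝ) else 0) * w k with hS1
  set S2 : ℝ := ∑ k : Fin l, w k with hS2
  show (∑ y : Fin l × Fin n, uAdj α β γ η (Hprod H Hs) (j, i) y * (w y.1 / Real.sqrt n))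
      = μ * (w j / Real.sqrt n)
  have hent : ∀ y : Fin l × Fin n, uAdj α β γ η (Hprod H Hs) (j, i) y * (w y.1 / Real.sqrt n)
      = α * ((if (Hprod H Hs).Adj (j, i) y then (1:ℝ) else 0) * (w y.1 / Real.sqrt n))
        + β * ((if (j, i) = y then ((Hprod H Hs).degree (j, i) : ℝ) * (w j / Real.sqrt n)
            else 0))
        + γ * (if (j, i) = y then (w j / Real.sqrt n) else 0)
        + η * (w y.1 / Real.sqrt n) := by
    intro y
    simp only [uAdj, adjM, degM, Matrix.add_apply, Matrix.smul_apply, Matrix.of_apply,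
      Matrix.diagonal_apply, Matrix.one_apply, smul_eq_mul]
    by_cases h : (j, i) = y
    · subst h
      simp [(Hprod H Hs).irrefl]
      ring
    · by_cases ha : (Hprod H Hs).Adj (j, i) y <;> simp [h, ha] <;> ring
  rw [Finset.sum_congr rfl (fun y _ => hent y)]
  simp only [Finset.sum_add_distrib, ← Finset.mul_sum, Finset.sum_ite_eq,
    Finset.mem_univ, if_pos]
  -- evaluate the adjacency sum
  have hadj : (∑ y : Fin l × Fin n,
      (if (Hprod H Hs).Adj (j, i) y then (1:ℝ) else 0) * (w y.1 / Real.sqrt n))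
      = (r j : ℝ) * (w j / Real.sqrt n) + S1 / Real.sqrt n := by
    rw [Fintype.sum_prod_type]
    have step : ∀ (k : Fin l) (m : Fin n),
        (if (Hprod H Hs).Adj (j, i) (k, m) then (1:ℝ) else 0) * (w k / Real.sqrt n)
        = (if j = k then (if (Hs j).Adj i m then (1:ℝ) else 0) * (w j / Real.sqrt n) else 0)
          + (if H.Adj j k then (if i = m then (1:ℝ) else 0) * (w k / Real.sqrt n) else 0) := by
      intro k m
      have hiff : (Hprod H Hs).Adj (j, i) (k, m) ↔
          (j = k ∧ (Hs j).Adj i m) ∨ (H.Adj j k ∧ i = m) := Iff.rfl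
      simp only [hiff]
      by_cases h1 : j = k
      · subst h1
        simp [H.irrefl]
      · simp only [h1, false_and, false_or, if_false, zero_add]
        by_cases h2 : H.Adj j k <;> by_cases h3 : i = m <;> simp [h2, h3]
    simp only [step, Finset.sum_add_distrib]
    congr 1
    · rw [Finset.sum_comm]
      simp only [Finset.sum_ite_eq, Finset.mem_univ, if_pos, ← Finset.sum_mul]
      rw [ind_sum_deg, hreg j i]
    · have inner : ∀ k : Fin l,
          (∑ m : Fin n, if H.Adj j k then (if i = m then (1:ℝ) else 0) * (w k / Real.sqrt n) else 0)
          = (if H.Adj j k then (1:ℝ) else 0) * (w k / Real.sqrt n) := by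
        intro k
        by_cases h : H.Adj j k <;> simp [h, Finset.sum_ite_eq]
      simp only [inner]
      rw [hS1, Finset.sum_div]
      exact Finset.sum_congr rfl fun k _ => by rw [mul_div_assoc]
  have hJ : (∑ y : Fin l × Fin n, w y.1 / Real.sqrt n) = (n : ℝ) * S2 / Real.sqrt n := by
    rw [Fintype.sum_prod_type]
    simp only [Finset.sum_const, Finset.card_univ, Fintype.card_fin, nsmul_eq_mul]
    rw [← Finset.mul_sum, ← Finset.sum_div, ← hS2, mul_div_assoc]
  rw [hadj, hJ, Hprod_degree H Hs j i, hreg j i]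
  have hsq : Real.sqrt n ≠ 0 := by
    positivity
  have hsq : Real.sqrt (n:ℝ) ≠ 0 := by positivity
  field_simp
  linear_combination hkey
end

section
/- In the setting of the universal adjacency spectrum theorem for the H-product, fix i ∈ {2,…,n} and let u_i be a common unit eigenvector of all A(H_j) with A(H_j) u_i = λ_{i,j} u_i and J_n u_i = 0. If (μ, (w_1,…,w_l)^T) is an eigenpair of the l×l matrix C_i (with diagonal entries αλ_{i,j} + β(r_j + d_H(j)) + γ and off-diagonal entries ρ_{j,k}α), then the vector of dimension nl whose j-th block is w_j u_i is an eigenvector of U(Ĝ) with eigenvalue μ. -/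
open Matrix Polynomial
open scoped Classical

lemma deg_Hprod {l n : ℕ} (H : SimpleGraph (Fin l)) (Hs : Fin l → SimpleGraph (Fin n))
    (j : Fin l) (i : Fin n) :
    (Hprod H Hs).degree (j, i) = (Hs j).degree i + H.degree j := by
  classical
  have e1 : (Hprod H Hs).degree (j, i)
      = ∑ y : Fin l × Fin n, if (Hprod H Hs).Adj (j, i) y then 1 else 0 := by
    rw [SimpleGraph.degree, SimpleGraph.neighborFinset_eq_filter, Finset.card_filter]
  have e2 : (Hs j).degree i = ∑ m, if (Hs j).Adj i m then 1 else 0 := by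
    rw [SimpleGraph.degree, SimpleGraph.neighborFinset_eq_filter, Finset.card_filter]
  have e3 : H.degree j = ∑ k, if H.Adj j k then 1 else 0 := by
    rw [SimpleGraph.degree, SimpleGraph.neighborFinset_eq_filter, Finset.card_filter]
  rw [e1, e2, e3, Fintype.sum_prod_type]
  have split : ∀ k m, (if (Hprod H Hs).Adj (j, i) (k, m) then (1:ℕ) else 0)
      = (if j = k ∧ (Hs j).Adj i m then 1 else 0)
        + (if H.Adj j k ∧ i = m then 1 else 0) := by
    intro k m
    by_cases h1 : j = k ∧ (Hs j).Adj i m <;> by_cases h2 : H.Adj j k ∧ i = m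
    · exact absurd (h1.1 ▸ h2.1) (H.irrefl)
    all_goals simp [Hprod, h1, h2]
  simp only [split, Finset.sum_add_distrib]
  congr 1
  · have : (∑ k, ∑ m, (if j = k ∧ (Hs j).Adj i m then (1:ℕ) else 0))
        = ∑ k, if j = k then (∑ m, if (Hs j).Adj i m then (1:ℕ) else 0) else 0 := by
      refine Finset.sum_congr rfl fun k _ => ?_
      by_cases h : j = k <;> simp [h, ite_and]
    rw [this, Finset.sum_ite_eq]
    simp
  · refine Finset.sum_congr rfl fun k _ => ?_
    by_cases h : H.Adj j k <;> simp [h, ite_and]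

/-- Eigenpairs of the quotient matrices `C_i` (`i ≥ 2`) lift to eigenpairs of the universal
adjacency matrix of the H-product of commuting regular graphs. -/
theorem uAdj_Hprod_Ci_eigvec_lift {l n : ℕ} (H : SimpleGraph (Fin l))
    (Hs : Fin l → SimpleGraph (Fin n)) (r : Fin l → ℕ)
    (hreg : ∀ j, (Hs j).IsRegularOfDegree (r j))
    (hcomm : ∀ j k, adjM (Hs j) * adjM (Hs k) = adjM (Hs k) * adjM (Hs j))
    (α β γ η : ℝ) (hα : α ≠ 0)
    (v : Fin n → ℝ) (hv : v ⬝ᵥ v = 1)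
    (lam : Fin l → ℝ)
    (heig : ∀ j, adjM (Hs j) *ᵥ v = lam j • v)
    (hJ : ∑ x, v x = 0)
    (μ : ℝ) (w : Fin l → ℝ)
    (hμ : (Matrix.of (fun j k : Fin l =>
        if j = k then α * lam j + β * ((r j : ℝ) + (H.degree j : ℝ)) + γ
        else if H.Adj j k then α else 0)) *ᵥ w = μ • w) :
    uAdj α β γ η (Hprod H Hs) *ᵥ (fun x : Fin l × Fin n => w x.1 * v x.2)
      = μ • (fun x : Fin l × Fin n => w x.1 * v x.2) := by
  classical
  have h1 : adjM (Hprod H Hs) *ᵥ (fun x : Fin l × Fin n => w x.1 * v x.2)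
      = fun x : Fin l × Fin n =>
        w x.1 * lam x.1 * v x.2 + (∑ k, if H.Adj x.1 k then w k else 0) * v x.2 := by
    funext x
    obtain ⟨j, i⟩ := x
    simp only [mulVec, dotProduct, adjM, of_apply]
    rw [Fintype.sum_prod_type]
    have split : ∀ k m, (if (Hprod H Hs).Adj (j, i) (k, m) then (1:ℝ) else 0) * (w k * v m)
        = (if j = k ∧ (Hs j).Adj i m then (1:ℝ) else 0) * (w k * v m)
          + (if H.Adj j k ∧ i = m then (1:ℝ) else 0) * (w k * v m) := by
      intro k m
      by_cases hh1 : j = k ∧ (Hs j).Adj i m <;> by_cases hh2 : H.Adj j k ∧ i = m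
      · exact absurd (hh1.1 ▸ hh2.1) (H.irrefl)
      all_goals simp [Hprod, hh1, hh2]
    simp only [split, Finset.sum_add_distrib]
    congr 1
    · have : (∑ k, ∑ m, (if j = k ∧ (Hs j).Adj i m then (1:ℝ) else 0) * (w k * v m))
          = ∑ k, if j = k then ∑ m, (if (Hs j).Adj i m then (1:ℝ) else 0) * (w k * v m) else 0 := by
        refine Finset.sum_congr rfl fun k _ => ?_
        by_cases h : j = k <;> simp [h, ite_and]
      rw [this, Finset.sum_ite_eq]
      have he := congrFun (heig j) i
      simp only [mulVec, dotProduct, adjM, of_apply, Pi.smul_apply, smul_eq_mul] at he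
      simp only [Finset.mem_univ, if_true]
      calc ∑ m, (if (Hs j).Adj i m then (1:ℝ) else 0) * (w j * v m)
          = w j * ∑ m, (if (Hs j).Adj i m then (1:ℝ) else 0) * v m := by
            rw [Finset.mul_sum]; refine Finset.sum_congr rfl fun m _ => by ring
        _ = w j * lam j * v i := by rw [he]; ring
    · have : (∑ k, ∑ m, (if H.Adj j k ∧ i = m then (1:ℝ) else 0) * (w k * v m))
          = ∑ k, (if H.Adj j k then w k * v i else 0) := by
        refine Finset.sum_congr rfl fun k _ => ?_
        by_cases h : H.Adj j k <;> simp [h, ite_and]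
      rw [this, Finset.sum_mul]
      refine Finset.sum_congr rfl fun k _ => ?_
      by_cases h : H.Adj j k <;> simp [h]
  have h2 : degM (Hprod H Hs) *ᵥ (fun x : Fin l × Fin n => w x.1 * v x.2)
      = fun x : Fin l × Fin n =>
        ((r x.1 : ℝ) + (H.degree x.1 : ℝ)) * (w x.1 * v x.2) := by
    funext x
    obtain ⟨j, i⟩ := x
    simp only [degM, mulVec_diagonal]
    rw [deg_Hprod]
    have := hreg j i
    push_cast [this]
    ring
  have h3 : (1 : Matrix (Fin l × Fin n) (Fin l × Fin n) ℝ) *ᵥ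
      (fun x : Fin l × Fin n => w x.1 * v x.2)
      = fun x : Fin l × Fin n => w x.1 * v x.2 := one_mulVec _
  have h4 : (Matrix.of fun _ _ : Fin l × Fin n => (1:ℝ)) *ᵥ
      (fun x : Fin l × Fin n => w x.1 * v x.2) = 0 := by
    funext x
    simp only [mulVec, dotProduct, of_apply, one_mul, Pi.zero_apply]
    rw [Fintype.sum_prod_type]
    calc (∑ k, ∑ m, w k * v m) = ∑ k : Fin l, w k * ∑ m, v m := by
          refine Finset.sum_congr rfl fun k _ => (Finset.mul_sum _ _ _).symm
      _ = 0 := by simp [hJ]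
  rw [uAdj, add_mulVec, add_mulVec, add_mulVec, smul_mulVec, smul_mulVec,
    smul_mulVec, smul_mulVec, h1, h2, h3, h4]
  funext x
  obtain ⟨j, i⟩ := x
  have hC := congrFun hμ j
  simp only [mulVec, dotProduct, of_apply, Pi.smul_apply, smul_eq_mul] at hC
  have hsum : (∑ k, (if j = k then α * lam j + β * ((r j : ℝ) + (H.degree j : ℝ)) + γ
        else if H.Adj j k then α else 0) * w k)
      = (α * lam j + β * ((r j : ℝ) + (H.degree j : ℝ)) + γ) * w j
        + α * ∑ k, (if H.Adj j k then w k else 0) := by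
    have e1 : (∑ k, if j = k then
          (α * lam j + β * ((r j : ℝ) + (H.degree j : ℝ)) + γ) * w k else 0)
        = (α * lam j + β * ((r j : ℝ) + (H.degree j : ℝ)) + γ) * w j := by simp
    rw [Finset.mul_sum, ← e1, ← Finset.sum_add_distrib]
    refine Finset.sum_congr rfl fun k _ => ?_
    by_cases h : j = k
    · subst h; simp [H.irrefl]
    · by_cases h2 : H.Adj j k <;> simp [h, h2, mul_comm]
  have key : μ * w j = (α * lam j + β * ((r j : ℝ) + (H.degree j : ℝ)) + γ) * w j
      + α * ∑ k, (if H.Adj j k then w k else 0) := by rw [← hC, hsum]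
  simp only [Pi.add_apply, Pi.smul_apply, smul_eq_mul, Pi.zero_apply]
  linear_combination (- v i) * key
end

section
/- Let A_1,…,A_n be real symmetric m×m matrices that pairwise commute, and let I_m be replaced via a common orthonormal eigenbasis: if U = (u_1|…|u_m) is an orthogonal matrix whose columns are common eigenvectors of all A_j with A_j u_i = λ_{i,j} u_i, then the block matrix with diagonal blocks A_j and off-diagonal blocks ρ_{j,k} I_m (ρ_{j,k} = ρ_{k,j} ∈ ℝ) has spectrum equal to the union over i = 1,…,m of the spectra of the n×n matrices with diagonal entries λ_{i,1},…,λ_{i,n} and off-diagonal entries ρ_{j,k}. -/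
open Matrix Polynomial

theorem charpoly_blockDiagonal' {o n : Type*} [Fintype o] [Fintype n] [DecidableEq o]
    [DecidableEq n] {R : Type*} [CommRing R] (Q : o → Matrix n n R) :
    (blockDiagonal Q).charpoly = ∏ i, (Q i).charpoly := by
  have h : charmatrix (blockDiagonal Q) = blockDiagonal (fun i => charmatrix (Q i)) := by
    unfold charmatrix
    simp only [RingHom.mapMatrix_apply]
    rw [show (fun i => scalar n X - (Q i).map (C : R →+* R[X])) =
        (fun i => scalar n X) - (fun i => (Q i).map (C : R →+* R[X])) from rfl,
      blockDiagonal_sub, blockDiagonal_map _ (⇑(C : R →+* R[X])) (by simp)]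
    congr 1
    rw [scalar_apply, scalar_apply]; exact (blockDiagonal_diagonal fun _ _ => X).symm
  rw [charpoly, h, det_blockDiagonal]
  rfl

theorem charpoly_conj_orth {n : Type*} [Fintype n] [DecidableEq n]
    {R : Type*} [CommRing R] (W N : Matrix n n R) (hW : W * Wᵀ = 1) :
    (W * N * Wᵀ).charpoly = N.charpoly := by
  have hW' : W.map (C : R →+* R[X]) * (W.map (C : R →+* R[X]))ᵀ = 1 := by
    rw [← transpose_map, ← Matrix.map_mul, hW, Matrix.map_one _ (by simp) (by simp)]
  set W' := W.map (C : R →+* R[X]) with hW'def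
  have key : charmatrix (W * N * Wᵀ) = W' * charmatrix N * W'ᵀ := by
    unfold charmatrix
    simp only [RingHom.mapMatrix_apply]
    rw [Matrix.mul_sub, Matrix.sub_mul, ← transpose_map, ← Matrix.map_mul, ← Matrix.map_mul]
    congr 1
    rw [← (scalar_commute X (fun r => Commute.all _ _) W').eq, mul_assoc,
      transpose_map, hW', mul_one]
  rw [charpoly, key, det_mul, det_mul, mul_comm, ← mul_assoc, ← det_mul]
  rw [show W'ᵀ * W' = 1 from mul_eq_one_comm.mp hW', det_one, one_mul]
  rfl

open Kronecker

/-- For pairwise commuting real symmetric matrices with a common orthonormal eigenbasis,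
the block matrix with diagonal blocks `A_j` and off-diagonal blocks `ρ_{j,k} I_m` has as
spectrum the union over `i` of the spectra of the `n×n` quotient matrices. -/
theorem spectrum_block_commuting {n m : ℕ}
    (A : Fin n → Matrix (Fin m) (Fin m) ℝ)
    (hA : ∀ j, (A j).IsSymm)
    (hcomm : ∀ j k, A j * A k = A k * A j)
    (u : Fin m → (Fin m → ℝ))
    (horth : ∀ i i', u i ⬝ᵥ u i' = if i = i' then (1 : ℝ) else 0)
    (lam : Fin m → Fin n → ℝ)
    (heig : ∀ j i, A j *ᵥ u i = lam i j • u i)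
    (ρ : Fin n → Fin n → ℝ) (hρ : ∀ j k, ρ j k = ρ k j) :
    (Matrix.of (fun x y : Fin n × Fin m =>
        if x.1 = y.1 then A x.1 x.2 y.2
        else ρ x.1 y.1 * (if x.2 = y.2 then (1 : ℝ) else 0))).charpoly.roots
      = ∑ i : Fin m,
          (Matrix.of (fun j k : Fin n =>
            if j = k then lam i j else ρ j k)).charpoly.roots := by
  classical
  set U : Matrix (Fin m) (Fin m) ℝ := Matrix.of fun x i => u i x with hUdef
  have hUtU : Uᵀ * U = 1 := by
    ext i i'
    simpa [Matrix.mul_apply, Matrix.one_apply, hUdef, mul_comm, dotProduct] using horth i i'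
  have hUUt : U * Uᵀ = 1 := mul_eq_one_comm.mp hUtU
  set Q : Fin m → Matrix (Fin n) (Fin n) ℝ :=
    fun i => Matrix.of fun j k => if j = k then lam i j else ρ j k with hQdef
  set M : Matrix (Fin n × Fin m) (Fin n × Fin m) ℝ := Matrix.of (fun x y : Fin n × Fin m =>
      if x.1 = y.1 then A x.1 x.2 y.2
      else ρ x.1 y.1 * (if x.2 = y.2 then (1 : ℝ) else 0)) with hMdef
  set W : Matrix (Fin n × Fin m) (Fin n × Fin m) ℝ :=
    (1 : Matrix (Fin n) (Fin n) ℝ) ⊗ₖ U with hWdef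
  have hWWt : W * Wᵀ = 1 := by
    rw [hWdef, ← kroneckerMap_transpose, ← mul_kronecker_mul, transpose_one, mul_one, hUUt,
      one_kronecker_one]
  have hMW : M * W = W * blockDiagonal Q := by
    ext ⟨j, x⟩ ⟨k, i⟩
    rw [Matrix.mul_apply, Matrix.mul_apply]
    rw [Fintype.sum_prod_type, Fintype.sum_prod_type]
    have hL : ∀ l : Fin n, ∑ y : Fin m, M (j, x) (l, y) * W (l, y) (k, i)
        = if l = k then ∑ y : Fin m, M (j, x) (k, y) * U y i else 0 := by
      intro l
      by_cases h : l = k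
      · subst h; simp [hWdef, Matrix.one_apply]
      · simp [hWdef, Matrix.one_apply, h]
    have hR : ∀ l : Fin n, ∑ y : Fin m, W (j, x) (l, y) * blockDiagonal Q (l, y) (k, i)
        = if l = j then U x i * Q i j k else 0 := by
      intro l
      by_cases h : l = j
      · subst h
        simp only [hWdef, kroneckerMap_apply, Matrix.one_apply_eq, one_mul,
          blockDiagonal_apply, Matrix.one_apply]
        rw [Finset.sum_eq_single i] <;> simp +contextual [eq_comm]
      · simp [hWdef, Matrix.one_apply, Ne.symm h, h]
    rw [Finset.sum_congr rfl fun l _ => hL l, Finset.sum_congr rfl fun l _ => hR l,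
      Finset.sum_ite_eq', Finset.sum_ite_eq']
    simp only [Finset.mem_univ, if_true]
    by_cases h : j = k
    · subst h
      have := congrFun (heig j i) x
      simp only [mulVec, dotProduct, Pi.smul_apply, smul_eq_mul] at this
      simp only [hMdef, hQdef, Matrix.of_apply, hUdef, if_true]
      rw [this]; ring
    · simp only [hMdef, hQdef, Matrix.of_apply, if_neg h, hUdef]
      rw [Finset.sum_congr rfl (fun y _ => by rw [mul_assoc]), ← Finset.mul_sum]
      simp [eq_comm, mul_comm]
  have hMeq : M = W * blockDiagonal Q * Wᵀ := by
    rw [← hMW, mul_assoc, hWWt, mul_one]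
  rw [hMeq, charpoly_conj_orth _ _ hWWt, charpoly_blockDiagonal',
    Polynomial.roots_prod _ _ (Finset.prod_ne_zero_iff.mpr fun i _ => (Q i).charpoly_monic.ne_zero)]
  rfl
end
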